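/- arXiv:1701.02193 — 5 statements merged into one kernel-verified Lean document; each statement's English description precedes it below -/
import Mathlib

section
/- In Ruleset A of Quantum Nim (where every move must be a superposition of at least two distinct classical Nim moves, and a classical move is legal in a superposition of positions if it is legal in at least one position of the superposition), a superposition of single Nim heaps whose largest heap has size k ≥ 1 is equivalent (as an impartial game under normal play) to the classical Nim heap *(k−1). -/
namespace QGame

variable {Pos Move : Type} [DecidableEq Pos]

/-- Result of applying the superposed move `M` (a finite set of classical move
labels) to the superposition `S` of classical positions: the set of all results
of a classical move of `M` applied to a realisation where it is legal. -/
def qApply (Γ : Pos → Move → Option Pos) (S : Finset Pos) (M : Finset Move) :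
    Finset Pos :=
  S.biUnion fun G => M.biUnion fun m => (Γ G m).toFinset

/-- The classical move `m` is legal in at least one realisation of `S`. -/
def MoveLegal (Γ : Pos → Move → Option Pos) (S : Finset Pos) (m : Move) : Prop :=
  ∃ G ∈ S, (Γ G m).isSome

/-- Basic legality of a Q-move: nonempty, and each classical move is legal
in at least one realisation. -/
def QBase (Γ : Pos → Move → Option Pos) (S : Finset Pos) (M : Finset Move) : Prop :=
  M.Nonempty ∧ ∀ m ∈ M, MoveLegal Γ S m

/-- Ruleset A : superpositions of at least two distinct classical moves. -/
def QLegalA (Γ : Pos → Move → Option Pos) (S : Finset Pos) (M : Finset Move) : Prop :=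
  QBase Γ S M ∧ 2 ≤ M.card

/-- Ruleset B : as A, except a lone classical move may be played when it is the
only legal classical move over all realisations. -/
def QLegalB (Γ : Pos → Move → Option Pos) (S : Finset Pos) (M : Finset Move) : Prop :=
  QBase Γ S M ∧ (2 ≤ M.card ∨ ∀ m, MoveLegal Γ S m → m ∈ M)

/-- Ruleset C : a lone classical move must be legal in every realisation. -/
def QLegalC (Γ : Pos → Move → Option Pos) (S : Finset Pos) (M : Finset Move) : Prop :=
  QBase Γ S M ∧ (2 ≤ M.card ∨ ∀ G ∈ S, ∀ m ∈ M, (Γ G m).isSome)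

/-- A single classical move is C'-allowed: legal in every realisation where the
mover still has at least one classical move. -/
def SingleLegalC' (Γ : Pos → Move → Option Pos) (S : Finset Pos) (m : Move) : Prop :=
  ∀ G ∈ S, (∃ m', (Γ G m').isSome) → (Γ G m).isSome

/-- Ruleset C'. -/
def QLegalC' (Γ : Pos → Move → Option Pos) (S : Finset Pos) (M : Finset Move) : Prop :=
  QBase Γ S M ∧ (2 ≤ M.card ∨ ∀ m ∈ M, SingleLegalC' Γ S m)

/-- Ruleset D : any nonempty superposition of legal classical moves. -/
def QLegalD (Γ : Pos → Move → Option Pos) (S : Finset Pos) (M : Finset Move) : Prop :=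
  QBase Γ S M

def optA (Γ : Pos → Move → Option Pos) (S : Finset Pos) : Set (Finset Pos) :=
  {T | ∃ M, QLegalA Γ S M ∧ T = qApply Γ S M}
def optB (Γ : Pos → Move → Option Pos) (S : Finset Pos) : Set (Finset Pos) :=
  {T | ∃ M, QLegalB Γ S M ∧ T = qApply Γ S M}
def optC (Γ : Pos → Move → Option Pos) (S : Finset Pos) : Set (Finset Pos) :=
  {T | ∃ M, QLegalC Γ S M ∧ T = qApply Γ S M}
def optC' (Γ : Pos → Move → Option Pos) (S : Finset Pos) : Set (Finset Pos) :=
  {T | ∃ M, QLegalC' Γ S M ∧ T = qApply Γ S M}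
def optD (Γ : Pos → Move → Option Pos) (S : Finset Pos) : Set (Finset Pos) :=
  {T | ∃ M, QLegalD Γ S M ∧ T = qApply Γ S M}

/-- `NPos opt p` : under normal play, the player to move from `p` wins,
i.e. there is a move to a position all of whose options are again `NPos`
(that is, to a previous-player-win position). -/
inductive NPos {α : Type*} (opt : α → Set α) : α → Prop where
  | mk (p q : α) (hq : q ∈ opt p) (h : ∀ r, r ∈ opt q → NPos opt r) :
      NPos opt p

/-- `PPos opt p` : `p` is a previous-player win (the second player wins)
under normal play: every option is a next-player win. -/
def PPos {α : Type*} (opt : α → Set α) (p : α) : Prop :=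
  ∀ q ∈ opt p, NPos opt q

/-- Options of the sum of a game with a classical Nim heap: move in the game
component, or decrease the heap component. -/
def sumNimOpt {α : Type*} (opt : α → Set α) : α × ℕ → Set (α × ℕ) :=
  fun x => {y | (y.1 ∈ opt x.1 ∧ y.2 = x.2) ∨ (y.1 = x.1 ∧ y.2 < x.2)}

/-- `HasGrundy opt p n` : position `p` has Sprague–Grundy value `n` (the value
obtained by the mex rule). By the Sprague–Grundy theorem this holds iff the sum
of `p` with a Nim heap of `n` tokens is a previous-player win. -/
def HasGrundy {α : Type*} (opt : α → Set α) (p : α) (n : ℕ) : Prop :=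
  PPos (sumNimOpt opt) (p, n)

/-- Classical single-heap Nim: from a heap of `n` tokens, the move labelled `x`
removes `x` tokens, legal when `1 ≤ x ≤ n`. -/
def nimΓ : ℕ → ℕ → Option ℕ := fun n x =>
  if 1 ≤ x ∧ x ≤ n then some (n - x) else none

end QGame

/-! Write `max S` for the largest heap (`S.sup id`). A Ruleset A move uses two distinct removals;
the smaller one, applied to the largest heap, leaves a nonempty heap, while no result exceeds
`max S - 1`; so every option `T` satisfies `1 ≤ max T < max S`. Conversely, for `0 < j < max S`
the move removing `max S - j` or `max S` has an option with largest heap exactly `j`. Thus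
`S ↦ max S - 1` obeys the mex rule, and is the Grundy function. -/

namespace QGame

theorem hasGrundy_of_mex {α : Type*} {opt : α → Set α} (hwf : WellFounded fun q p => q ∈ opt p)
    (f : α → ℕ) (hne : ∀ p, ∀ q ∈ opt p, f q ≠ f p)
    (hmex : ∀ p, ∀ n < f p, ∃ q ∈ opt p, f q = n) (p : α) : HasGrundy opt p (f p) := by
  suffices h : ∀ p, PPos (sumNimOpt opt) (p, f p) ∧ ∀ n ≠ f p, NPos (sumNimOpt opt) (p, n) from
    (h p).1
  intro p
  induction p using hwf.induction with
  | _ p ih =>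
  have below : ∀ n < f p, NPos (sumNimOpt opt) (p, n) := by
    intro n hn
    obtain ⟨q, hq, rfl⟩ := hmex p n hn
    exact .mk _ (q, f q) (Or.inl ⟨hq, rfl⟩) (ih q hq).1
  have hP : PPos (sumNimOpt opt) (p, f p) := by
    rintro ⟨q, n⟩ (⟨hq, rfl⟩ | ⟨rfl, hn⟩)
    · exact (ih q hq).2 _ (hne p q hq).symm
    · exact below n hn
  refine ⟨hP, fun n hn => ?_⟩
  rcases hn.lt_or_gt with hlt | hgt
  · exact below n hlt
  · exact .mk _ (p, f p) (Or.inr ⟨rfl, hgt⟩) hP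

theorem isSome_nimΓ {G m : ℕ} : (nimΓ G m).isSome ↔ 1 ≤ m ∧ m ≤ G := by
  simp [nimΓ]

theorem moveLegal_nimΓ {S : Finset ℕ} {m : ℕ} :
    MoveLegal nimΓ S m ↔ 1 ≤ m ∧ ∃ G ∈ S, m ≤ G := by
  simp only [MoveLegal, isSome_nimΓ]
  aesop

theorem mem_qApply_nimΓ {S M : Finset ℕ} {a : ℕ} :
    a ∈ qApply nimΓ S M ↔ ∃ G ∈ S, ∃ m ∈ M, 1 ≤ m ∧ m ≤ G ∧ G - m = a := by
  simp [qApply, nimΓ, and_assoc]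

theorem sup_lt_of_mem_optA {S T : Finset ℕ} (hT : T ∈ optA nimΓ S) :
    0 < T.sup id ∧ T.sup id < S.sup id := by
  obtain ⟨M, ⟨⟨-, hlegal⟩, hcard⟩, rfl⟩ := hT
  obtain ⟨m₀, hm₀, m₁, hm₁, hne⟩ := Finset.one_lt_card.1 hcard
  obtain ⟨G, hG, -⟩ := (moveLegal_nimΓ.1 (hlegal m₀ hm₀)).2
  obtain ⟨k, hkS, hk : S.sup id = k⟩ := Finset.exists_mem_eq_sup S ⟨G, hG⟩ id
  have hle : ∀ m ∈ M, 1 ≤ m ∧ m ≤ k := fun m hm => by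
    obtain ⟨h1, G, hG, hmG⟩ := moveLegal_nimΓ.1 (hlegal m hm)
    exact ⟨h1, hk ▸ hmG.trans (Finset.le_sup (f := id) hG)⟩
  have hmin : min m₀ m₁ ∈ M := by rcases min_choice m₀ m₁ with h | h <;> rw [h] <;> assumption
  have hmem : k - min m₀ m₁ ∈ qApply nimΓ S M :=
    mem_qApply_nimΓ.2 ⟨k, hkS, _, hmin, (hle _ hmin).1, (hle _ hmin).2, rfl⟩
  have hlower : k - min m₀ m₁ ≤ (qApply nimΓ S M).sup id := Finset.le_sup (f := id) hmem
  have hupper : (qApply nimΓ S M).sup id ≤ k - 1 := Finset.sup_le fun a ha => by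
    obtain ⟨G, hG, m, -, h1, h2, rfl⟩ := mem_qApply_nimΓ.1 ha
    have : G ≤ k := hk ▸ Finset.le_sup (f := id) hG
    exact show G - m ≤ k - 1 by omega
  have := (hle m₀ hm₀).2
  have := (hle m₁ hm₁).2
  omega

theorem exists_mem_optA_sup_eq {S : Finset ℕ} {j : ℕ} (hj₀ : 0 < j) (hj : j < S.sup id) :
    ∃ T ∈ optA nimΓ S, T.sup id = j := by
  have hS : S.Nonempty := Finset.nonempty_iff_ne_empty.2 (by rintro rfl; simp at hj)
  obtain ⟨k, hkS, hk : S.sup id = k⟩ := Finset.exists_mem_eq_sup S hS id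
  have hlegal : QLegalA nimΓ S {k - j, k} := by
    have hM : ∀ m ∈ ({k - j, k} : Finset ℕ), 1 ≤ m ∧ m ≤ k := by
      simp only [Finset.mem_insert, Finset.mem_singleton, forall_eq_or_imp, forall_eq]
      omega
    refine ⟨⟨Finset.insert_nonempty _ _, fun m hm => ?_⟩, ?_⟩
    · exact moveLegal_nimΓ.2 ⟨(hM m hm).1, k, hkS, (hM m hm).2⟩
    · rw [Finset.card_pair (by omega)]
  refine ⟨_, ⟨_, hlegal, rfl⟩, le_antisymm (Finset.sup_le fun a ha => ?_) ?_⟩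
  · obtain ⟨G, hG, m, hm, h1, h2, rfl⟩ := mem_qApply_nimΓ.1 ha
    have : G ≤ k := hk ▸ Finset.le_sup (f := id) hG
    simp only [Finset.mem_insert, Finset.mem_singleton] at hm
    exact show G - m ≤ j by omega
  · have hmem : j ∈ qApply nimΓ S {k - j, k} :=
      mem_qApply_nimΓ.2 ⟨k, hkS, k - j, by simp, by omega, by omega, by omega⟩
    exact Finset.le_sup (f := id) hmem

theorem wellFounded_optA_nimΓ : WellFounded fun T S => T ∈ optA nimΓ S :=
  (measure fun S : Finset ℕ => S.sup id).wf.mono fun _ _ hT => (sup_lt_of_mem_optA hT).2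

theorem rulesetA_single_heap_value_general (S : Finset ℕ) (hS : S.Nonempty) (k : ℕ)
    (hmax : S.max' hS = k) :
    HasGrundy (optA nimΓ) S (k - 1) := by
  have hk : S.sup id = k := by rw [← hmax, Finset.max'_eq_sup', Finset.sup'_eq_sup]
  rw [← hk]
  refine hasGrundy_of_mex wellFounded_optA_nimΓ (fun T => T.sup id - 1) (fun S T hT => ?_)
    (fun S n hn => ?_) S
  · have := sup_lt_of_mem_optA hT
    omega
  · obtain ⟨T, hT, hTsup⟩ := exists_mem_optA_sup_eq n.succ_pos (by omega : n + 1 < S.sup id)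
    exact ⟨T, hT, by omega⟩

/-- In Ruleset A of Quantum Nim, a superposition of single Nim
heaps whose largest heap has size `k ≥ 1` has Grundy value `k - 1`. -/
theorem rulesetA_single_heap_value (S : Finset ℕ) (hS : S.Nonempty) (k : ℕ)
    (hk : 1 ≤ k) (hmax : S.max' hS = k) :
    HasGrundy (optA nimΓ) S (k - 1) :=
  rulesetA_single_heap_value_general S hS k hmax

end QGame
end

section
/- In Ruleset A of Quantum Nim on two heaps, for all i, j > 0, the quantum position that is the superposition ⟨Nim(i,0), Nim(0,j)⟩ has Grundy value max(i,j) − 1 + δ_{i,j}, where δ_{i,j} is 1 if i = j and 0 otherwise. -/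
namespace QGame

/-- Two-heap Nim: the move `(h, x)` removes `x ≥ 1` tokens from heap `h`. -/
def nim2Γ : ℕ × ℕ → Fin 2 × ℕ → Option (ℕ × ℕ) := fun p m =>
  if m.1 = 0 then
    if 1 ≤ m.2 ∧ m.2 ≤ p.1 then some (p.1 - m.2, p.2) else none
  else
    if 1 ≤ m.2 ∧ m.2 ≤ p.2 then some (p.1, p.2 - m.2) else none

/-! For superpositions whose realisations all lie on the two axes, only the largest first heap
`a` and the largest second heap `b` matter, and the Grundy value is `a` if `a = b` and
`max a b - 1` otherwise. A Q-move needs two distinct legal classical moves, so `a + b ≥ 2`, and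
it lowers every positive maximum by at least one, which makes this value drop. Conversely,
Q-moves made of two classical moves reach every smaller value: one move on each heap for the
diagonal, two moves on the larger heap otherwise. -/

section SpragueGrundy

variable {α : Type*} {opt : α → Set α} (C : α → Prop) (g : α → ℕ)

theorem outcome_sumNimOpt (h_opt : ∀ p, C p → ∀ q ∈ opt p, C q ∧ g q < g p)
    (h_mex : ∀ p, C p → ∀ k < g p, ∃ q ∈ opt p, g q = k) (p : α) (n : ℕ) (hp : C p) :
    (g p = n → PPos (sumNimOpt opt) (p, n)) ∧ (g p ≠ n → NPos (sumNimOpt opt) (p, n)) := by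
  -- `g p + n` decreases along every move used below: game moves lower `g`, heap moves lower `n`.
  obtain ⟨N, hN⟩ : ∃ N, g p + n = N := ⟨_, rfl⟩
  induction N using Nat.strong_induction_on generalizing p n with
  | _ N ih =>
  subst hN
  constructor
  · rintro rfl ⟨q, m⟩ (⟨hq, rfl⟩ | ⟨hqp, hm⟩)
    · obtain ⟨hCq, hlt⟩ := h_opt p hp q hq
      exact (ih _ (by omega) q (g p) hCq rfl).2 hlt.ne
    · obtain rfl : q = p := hqp
      have hm : m < g q := hm
      exact (ih _ (by omega) q m hp rfl).2 hm.ne'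
  · intro hne
    rcases lt_or_gt_of_ne hne with hlt | hgt
    · exact NPos.mk _ (p, g p) (Or.inr ⟨rfl, hlt⟩) ((ih _ (by omega) p (g p) hp rfl).1 rfl)
    · obtain ⟨q, hq, rfl⟩ := h_mex p hp n hgt
      exact NPos.mk _ (q, g q) (Or.inl ⟨hq, rfl⟩)
        ((ih _ (by omega) q (g q) (h_opt p hp q hq).1 rfl).1 rfl)

theorem hasGrundy_of_forall_mem_opt (h_opt : ∀ p, C p → ∀ q ∈ opt p, C q ∧ g q < g p)
    (h_mex : ∀ p, C p → ∀ k < g p, ∃ q ∈ opt p, g q = k) {p : α} (hp : C p) :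
    HasGrundy opt p (g p) :=
  (outcome_sumNimOpt C g h_opt h_mex p (g p) hp).1 rfl

end SpragueGrundy

theorem mem_qApply {Pos Move : Type} [DecidableEq Pos] {Γ : Pos → Move → Option Pos}
    {S : Finset Pos} {M : Finset Move} {q : Pos} :
    q ∈ qApply Γ S M ↔ ∃ G ∈ S, ∃ m ∈ M, Γ G m = some q := by
  simp [qApply]

theorem qApply_pair_mem_optA {Pos Move : Type} [DecidableEq Pos] [DecidableEq Move]
    {Γ : Pos → Move → Option Pos} {S : Finset Pos} {m m' : Move} (hne : m ≠ m')
    (hm : MoveLegal Γ S m) (hm' : MoveLegal Γ S m') : qApply Γ S {m, m'} ∈ optA Γ S := by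
  refine ⟨{m, m'}, ⟨⟨Finset.insert_nonempty _ _, ?_⟩, (Finset.card_pair hne).ge⟩, rfl⟩
  simp only [Finset.mem_insert, Finset.mem_singleton]
  rintro _ (rfl | rfl) <;> assumption

theorem nim2Γ_eq_some {a b x : ℕ} {h : Fin 2} {q : ℕ × ℕ} (hq : nim2Γ (a, b) (h, x) = some q) :
    (h = 0 ∧ 1 ≤ x ∧ x ≤ a ∧ q = (a - x, b)) ∨ (h = 1 ∧ 1 ≤ x ∧ x ≤ b ∧ q = (a, b - x)) := by
  fin_cases h <;> simp only [nim2Γ] at hq <;> split_ifs at hq <;> simp_all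

theorem nim2Γ_zero {a b x : ℕ} (h1 : 1 ≤ x) (h2 : x ≤ a) :
    nim2Γ (a, b) (0, x) = some (a - x, b) := by
  simp [nim2Γ, h1, h2]

theorem nim2Γ_one {a b x : ℕ} (h1 : 1 ≤ x) (h2 : x ≤ b) :
    nim2Γ (a, b) (1, x) = some (a, b - x) := by
  simp [nim2Γ, h1, h2]

def maxFst (T : Finset (ℕ × ℕ)) : ℕ := T.sup Prod.fst

def maxSnd (T : Finset (ℕ × ℕ)) : ℕ := T.sup Prod.snd

theorem MoveLegal.nim2Γ_bounds {T : Finset (ℕ × ℕ)} {h : Fin 2} {x : ℕ}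
    (hm : MoveLegal nim2Γ T (h, x)) :
    1 ≤ x ∧ (h = 0 → x ≤ maxFst T) ∧ (h = 1 → x ≤ maxSnd T) := by
  obtain ⟨⟨a, b⟩, hG, hs⟩ := hm
  obtain ⟨q, hq⟩ := Option.isSome_iff_exists.1 hs
  have ha : a ≤ maxFst T := Finset.le_sup (f := Prod.fst) hG
  have hb : b ≤ maxSnd T := Finset.le_sup (f := Prod.snd) hG
  rcases nim2Γ_eq_some hq with ⟨rfl, h1, h2, -⟩ | ⟨rfl, h1, h2, -⟩
  · exact ⟨h1, fun _ => by omega, by simp⟩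
  · exact ⟨h1, by simp, fun _ => by omega⟩

theorem two_le_maxFst_add_maxSnd {T : Finset (ℕ × ℕ)} {m m' : Fin 2 × ℕ}
    (hm : MoveLegal nim2Γ T m) (hm' : MoveLegal nim2Γ T m') (hne : m ≠ m') :
    2 ≤ maxFst T + maxSnd T := by
  obtain ⟨h, x⟩ := m
  obtain ⟨h', x'⟩ := m'
  obtain ⟨h1, h2, h3⟩ := hm.nim2Γ_bounds
  obtain ⟨h1', h2', h3'⟩ := hm'.nim2Γ_bounds
  fin_cases h <;> fin_cases h' <;> simp_all <;> omega

def OnAxes (T : Finset (ℕ × ℕ)) : Prop :=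
  ∀ p ∈ T, p.1 = 0 ∨ p.2 = 0

def axesGrundy (T : Finset (ℕ × ℕ)) : ℕ :=
  if maxFst T = maxSnd T then maxFst T else max (maxFst T) (maxSnd T) - 1

theorem axesGrundy_lt_axesGrundy {T U : Finset (ℕ × ℕ)} (h₁ : maxFst U ≤ maxFst T - 1)
    (h₂ : maxSnd U ≤ maxSnd T - 1) (h : 2 ≤ maxFst T + maxSnd T) :
    axesGrundy U < axesGrundy T := by
  unfold axesGrundy
  split_ifs <;> omega

namespace OnAxes

variable {T : Finset (ℕ × ℕ)} {M : Finset (Fin 2 × ℕ)}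

theorem mk_maxFst_zero_mem (hT : OnAxes T) (h : 0 < maxFst T) : (maxFst T, 0) ∈ T := by
  obtain ⟨p, hp, -⟩ := Finset.lt_sup_iff.1 h
  obtain ⟨q, hq, hqe⟩ := Finset.exists_mem_eq_sup T ⟨p, hp⟩ Prod.fst
  have hq₂ : q.2 = 0 := (hT q hq).resolve_left (by unfold maxFst at h; omega)
  rwa [maxFst, hqe, ← hq₂]

theorem zero_mk_maxSnd_mem (hT : OnAxes T) (h : 0 < maxSnd T) : (0, maxSnd T) ∈ T := by
  obtain ⟨p, hp, -⟩ := Finset.lt_sup_iff.1 h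
  obtain ⟨q, hq, hqe⟩ := Finset.exists_mem_eq_sup T ⟨p, hp⟩ Prod.snd
  have hq₁ : q.1 = 0 := (hT q hq).resolve_right (by unfold maxSnd at h; omega)
  rwa [maxSnd, hqe, ← hq₁]

theorem moveLegal_zero (hT : OnAxes T) {s : ℕ} (h1 : 1 ≤ s) (h2 : s ≤ maxFst T) :
    MoveLegal nim2Γ T (0, s) :=
  ⟨_, hT.mk_maxFst_zero_mem (by omega), by rw [nim2Γ_zero h1 h2]; rfl⟩

theorem moveLegal_one (hT : OnAxes T) {t : ℕ} (h1 : 1 ≤ t) (h2 : t ≤ maxSnd T) :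
    MoveLegal nim2Γ T (1, t) :=
  ⟨_, hT.zero_mk_maxSnd_mem (by omega), by rw [nim2Γ_one h1 h2]; rfl⟩

theorem mem_qApply (hT : OnAxes T) {q : ℕ × ℕ} (hq : q ∈ qApply nim2Γ T M) :
    (q.2 = 0 ∧ ∃ x, (0, x) ∈ M ∧ 1 ≤ x ∧ q.1 + x ≤ maxFst T) ∨
      (q.1 = 0 ∧ ∃ x, (1, x) ∈ M ∧ 1 ≤ x ∧ q.2 + x ≤ maxSnd T) := by
  obtain ⟨⟨a, b⟩, hG, ⟨h, x⟩, hm, hs⟩ := QGame.mem_qApply.1 hq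
  have ha : a ≤ maxFst T := Finset.le_sup (f := Prod.fst) hG
  have hb : b ≤ maxSnd T := Finset.le_sup (f := Prod.snd) hG
  have hab := hT _ hG
  rcases nim2Γ_eq_some hs with ⟨rfl, h1, h2, rfl⟩ | ⟨rfl, h1, h2, rfl⟩
  · exact Or.inl ⟨by simp only at hab ⊢; omega, x, hm, h1, by simp only; omega⟩
  · exact Or.inr ⟨by simp only at hab ⊢; omega, x, hm, h1, by simp only; omega⟩

theorem qApply_nim2Γ (hT : OnAxes T) : OnAxes (qApply nim2Γ T M) := fun _ hq =>
  (hT.mem_qApply hq).elim (fun h => Or.inr h.1) (fun h => Or.inl h.1)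

theorem maxFst_qApply_le (hT : OnAxes T) {s : ℕ} (hs : ∀ x, (0, x) ∈ M → s ≤ x) :
    maxFst (qApply nim2Γ T M) ≤ maxFst T - s := by
  refine Finset.sup_le fun q hq => ?_
  rcases hT.mem_qApply hq with ⟨-, x, hx, -, hle⟩ | ⟨h, -⟩
  · have := hs x hx
    omega
  · simp [h]

theorem maxSnd_qApply_le (hT : OnAxes T) {t : ℕ} (ht : ∀ x, (1, x) ∈ M → t ≤ x) :
    maxSnd (qApply nim2Γ T M) ≤ maxSnd T - t := by
  refine Finset.sup_le fun q hq => ?_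
  rcases hT.mem_qApply hq with ⟨h, -⟩ | ⟨-, x, hx, -, hle⟩
  · simp [h]
  · have := ht x hx
    omega

theorem maxFst_qApply_eq (hT : OnAxes T) {s : ℕ} (hsM : (0, s) ∈ M) (h1 : 1 ≤ s)
    (h2 : s ≤ maxFst T) (hs : ∀ x, (0, x) ∈ M → s ≤ x) :
    maxFst (qApply nim2Γ T M) = maxFst T - s := by
  refine le_antisymm (hT.maxFst_qApply_le hs) (Finset.le_sup (f := Prod.fst) (b := (_, 0)) ?_)
  exact QGame.mem_qApply.2
    ⟨_, hT.mk_maxFst_zero_mem (by omega), _, hsM, nim2Γ_zero h1 h2⟩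

theorem maxSnd_qApply_eq (hT : OnAxes T) {t : ℕ} (htM : (1, t) ∈ M) (h1 : 1 ≤ t)
    (h2 : t ≤ maxSnd T) (ht : ∀ x, (1, x) ∈ M → t ≤ x) :
    maxSnd (qApply nim2Γ T M) = maxSnd T - t := by
  refine le_antisymm (hT.maxSnd_qApply_le ht) (Finset.le_sup (f := Prod.snd) (b := (0, _)) ?_)
  exact QGame.mem_qApply.2
    ⟨_, hT.zero_mk_maxSnd_mem (by omega), _, htM, nim2Γ_one h1 h2⟩

theorem of_mem_optA (hT : OnAxes T) {U : Finset (ℕ × ℕ)} (hU : U ∈ optA nim2Γ T) :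
    OnAxes U := by
  obtain ⟨M, -, rfl⟩ := hU
  exact hT.qApply_nim2Γ

theorem axesGrundy_lt_of_mem_optA (hT : OnAxes T) {U : Finset (ℕ × ℕ)}
    (hU : U ∈ optA nim2Γ T) : axesGrundy U < axesGrundy T := by
  obtain ⟨M, ⟨⟨-, hleg⟩, hcard⟩, rfl⟩ := hU
  have hsize : ∀ h x, (h, x) ∈ M → 1 ≤ x := fun h x hm => (hleg (h, x) hm).nim2Γ_bounds.1
  obtain ⟨m, hm, m', hm', hne⟩ := Finset.one_lt_card.1 hcard
  exact axesGrundy_lt_axesGrundy (hT.maxFst_qApply_le (hsize 0)) (hT.maxSnd_qApply_le (hsize 1))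
    (two_le_maxFst_add_maxSnd (hleg m hm) (hleg m' hm') hne)

theorem exists_optA_both (hT : OnAxes T) {s t : ℕ} (hs₁ : 1 ≤ s) (hs₂ : s ≤ maxFst T)
    (ht₁ : 1 ≤ t) (ht₂ : t ≤ maxSnd T) :
    ∃ U ∈ optA nim2Γ T, maxFst U = maxFst T - s ∧ maxSnd U = maxSnd T - t :=
  ⟨_, qApply_pair_mem_optA (by simp) (hT.moveLegal_zero hs₁ hs₂) (hT.moveLegal_one ht₁ ht₂),
    hT.maxFst_qApply_eq (by simp) hs₁ hs₂ (by simp), hT.maxSnd_qApply_eq (by simp) ht₁ ht₂ (by simp)⟩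

theorem exists_optA_fst (hT : OnAxes T) {s s' : ℕ} (hs₁ : 1 ≤ s) (hs : s < s')
    (hs₂ : s' ≤ maxFst T) : ∃ U ∈ optA nim2Γ T, maxFst U = maxFst T - s ∧ maxSnd U = 0 :=
  ⟨_, qApply_pair_mem_optA (by simpa using hs.ne) (hT.moveLegal_zero hs₁ (by omega))
      (hT.moveLegal_zero (by omega) hs₂),
    hT.maxFst_qApply_eq (by simp) hs₁ (by omega) (by simpa using hs.le),
    Nat.le_zero.1 (by simpa using hT.maxSnd_qApply_le (t := maxSnd T) (by simp))⟩

/-- Realisations whose second heap is empty admit no move on the second heap, so they vanish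
from the result even when `maxFst T > 0`. -/
theorem exists_optA_snd (hT : OnAxes T) {t t' : ℕ} (ht₁ : 1 ≤ t) (ht : t < t')
    (ht₂ : t' ≤ maxSnd T) : ∃ U ∈ optA nim2Γ T, maxFst U = 0 ∧ maxSnd U = maxSnd T - t :=
  ⟨_, qApply_pair_mem_optA (by simpa using ht.ne) (hT.moveLegal_one ht₁ (by omega))
      (hT.moveLegal_one (by omega) ht₂),
    Nat.le_zero.1 (by simpa using hT.maxFst_qApply_le (s := maxFst T) (by simp)),
    hT.maxSnd_qApply_eq (by simp) ht₁ (by omega) (by simpa using ht.le)⟩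

theorem exists_optA_axesGrundy_eq (hT : OnAxes T) {k : ℕ} (hk : k < axesGrundy T) :
    ∃ U ∈ optA nim2Γ T, axesGrundy U = k := by
  unfold axesGrundy at hk
  rcases lt_trichotomy (maxFst T) (maxSnd T) with hlt | heq | hgt
  · rw [if_neg hlt.ne] at hk
    obtain ⟨U, hU, h₁, h₂⟩ := hT.exists_optA_snd (t := maxSnd T - (k + 1))
      (by omega) (by omega) le_rfl
    refine ⟨U, hU, ?_⟩
    rw [axesGrundy, h₁, h₂, if_neg (by omega)]
    omega
  · rw [if_pos heq] at hk
    obtain ⟨U, hU, h₁, h₂⟩ := hT.exists_optA_both (s := maxFst T - k) (t := maxSnd T - k)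
      (by omega) (by omega) (by omega) (by omega)
    refine ⟨U, hU, ?_⟩
    rw [axesGrundy, h₁, h₂, if_pos (by omega)]
    omega
  · rw [if_neg hgt.ne'] at hk
    obtain ⟨U, hU, h₁, h₂⟩ := hT.exists_optA_fst (s := maxFst T - (k + 1))
      (by omega) (by omega) le_rfl
    refine ⟨U, hU, ?_⟩
    rw [axesGrundy, h₁, h₂, if_neg (by omega)]
    omega

end OnAxes

theorem rulesetA_two_heaps_general (i j : ℕ) (hi : 0 < i) :
    HasGrundy (optA nim2Γ) ({(i, 0), (0, j)} : Finset (ℕ × ℕ))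
      (max i j - 1 + if i = j then 1 else 0) := by
  have hT : OnAxes {(i, 0), (0, j)} := by simp [OnAxes]
  have hvalue : axesGrundy {(i, 0), (0, j)} = max i j - 1 + if i = j then 1 else 0 := by
    have h₁ : maxFst {(i, 0), (0, j)} = i := by simp [maxFst]
    have h₂ : maxSnd {(i, 0), (0, j)} = j := by simp [maxSnd]
    rw [axesGrundy, h₁, h₂]
    split_ifs <;> omega
  rw [← hvalue]
  exact hasGrundy_of_forall_mem_opt OnAxes axesGrundy
    (fun _ hS _ hU => ⟨hS.of_mem_optA hU, hS.axesGrundy_lt_of_mem_optA hU⟩)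
    (fun _ hS _ hk => hS.exists_optA_axesGrundy_eq hk) hT

/-- in Ruleset A, for `i, j > 0`, the superposition
`⟨Nim(i,0), Nim(0,j)⟩` has Grundy value `max i j - 1 + δ_{i,j}`. -/
theorem rulesetA_two_heaps (i j : ℕ) (hi : 0 < i) (hj : 0 < j) :
    HasGrundy (optA nim2Γ) ({(i, 0), (0, j)} : Finset (ℕ × ℕ))
      (max i j - 1 + if i = j then 1 else 0) :=
  rulesetA_two_heaps_general i j hi

end QGame
end

section
/- In Ruleset A restricted to superpositions of exactly two classical moves (Ruleset A|2), the quantum Nim position ⟨Nim(1,1,1)⟩ (three heaps of one token each) has Grundy value 0, whereas in unrestricted Ruleset A the position ⟨Nim(1,1,1)⟩ has Grundy value 1 (i.e. value *). Hence restricting Ruleset A to superpositions of at most two moves can change the value of a three-heap Nim position. -/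
namespace QGame

/-- Three-heap Nim: the move `(h, x)` removes `x ≥ 1` tokens from heap `h`. -/
def nim3Γ : ℕ × ℕ × ℕ → Fin 3 × ℕ → Option (ℕ × ℕ × ℕ) := fun p m =>
  if 1 ≤ m.2 then
    if m.1 = 0 then
      (if m.2 ≤ p.1 then some (p.1 - m.2, p.2.1, p.2.2) else none)
    else if m.1 = 1 then
      (if m.2 ≤ p.2.1 then some (p.1, p.2.1 - m.2, p.2.2) else none)
    else
      (if m.2 ≤ p.2.2 then some (p.1, p.2.1, p.2.2 - m.2) else none)
  else none

/-- Ruleset A restricted to superpositions of exactly two classical moves. -/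
def QLegalA2 {Pos Move : Type} [DecidableEq Pos] (Γ : Pos → Move → Option Pos)
    (S : Finset Pos) (M : Finset Move) : Prop :=
  QBase Γ S M ∧ M.card = 2

def optA2 {Pos Move : Type} [DecidableEq Pos] (Γ : Pos → Move → Option Pos)
    (S : Finset Pos) : Set (Finset Pos) :=
  {T | ∃ M, QLegalA2 Γ S M ∧ T = qApply Γ S M}

section SumWithNimHeap

variable {α : Type*} {opt : α → Set α} {p q : α}

theorem hasGrundy_zero_iff :
    HasGrundy opt p 0 ↔ ∀ q ∈ opt p, NPos (sumNimOpt opt) (q, 0) := by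
  refine ⟨fun h q hq => h (q, 0) (Or.inl ⟨hq, rfl⟩), ?_⟩
  rintro h ⟨q, k⟩ (⟨hq, rfl⟩ | ⟨-, hk⟩)
  · exact h q hq
  · exact absurd hk (Nat.not_lt_zero k)

theorem hasGrundy_one_iff :
    HasGrundy opt p 1 ↔
      NPos (sumNimOpt opt) (p, 0) ∧ ∀ q ∈ opt p, NPos (sumNimOpt opt) (q, 1) := by
  refine ⟨fun h => ⟨h (p, 0) (Or.inr ⟨rfl, Nat.one_pos⟩),
    fun q hq => h (q, 1) (Or.inl ⟨hq, rfl⟩)⟩, ?_⟩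
  rintro ⟨hp, hopt⟩ ⟨q, k⟩ (⟨hq, rfl⟩ | ⟨rfl, hk⟩)
  · exact hopt q hq
  · obtain rfl : k = 0 := Nat.lt_one_iff.1 hk
    exact hp

theorem HasGrundy.nPos_of_mem {n : ℕ} (h : HasGrundy opt q n) (hq : q ∈ opt p) :
    NPos (sumNimOpt opt) (p, n) :=
  NPos.mk _ (q, n) (Or.inl ⟨hq, rfl⟩) h

theorem HasGrundy.nPos_of_lt {j k : ℕ} (h : HasGrundy opt p j) (hjk : j < k) :
    NPos (sumNimOpt opt) (p, k) :=
  NPos.mk _ (p, j) (Or.inr ⟨rfl, hjk⟩) h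

end SumWithNimHeap

section QuantumOptions

variable {Pos Move : Type} [DecidableEq Pos]

instance (Γ : Pos → Move → Option Pos) (S : Finset Pos) (M : Finset Move) :
    Decidable (QBase Γ S M) := by
  unfold QBase MoveLegal; infer_instance

instance (Γ : Pos → Move → Option Pos) (S : Finset Pos) (M : Finset Move) :
    Decidable (QLegalA Γ S M) := by
  unfold QLegalA; infer_instance

instance (Γ : Pos → Move → Option Pos) (S : Finset Pos) (M : Finset Move) :
    Decidable (QLegalA2 Γ S M) := by
  unfold QLegalA2; infer_instance

variable {Γ : Pos → Move → Option Pos} {S : Finset Pos}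

theorem setOf_qApply_eq_image {R : Finset Move → Prop} [DecidablePred R] {L : Finset Move}
    (hR : ∀ M, R M → M ⊆ L) :
    {T | ∃ M, R M ∧ T = qApply Γ S M} = ↑((L.powerset.filter R).image (qApply Γ S)) := by
  ext T
  simp only [Finset.coe_image, Finset.coe_filter, Finset.mem_powerset, Set.mem_image]
  exact ⟨fun ⟨M, hM, hT⟩ => ⟨M, ⟨hR M hM, hM⟩, hT.symm⟩,
    fun ⟨M, ⟨_, hM⟩, hT⟩ => ⟨M, hM, hT.symm⟩⟩

theorem optA_eq_image {L : Finset Move} (hL : ∀ m, MoveLegal Γ S m → m ∈ L) :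
    optA Γ S = ↑((L.powerset.filter (QLegalA Γ S)).image (qApply Γ S)) :=
  setOf_qApply_eq_image fun _ hM m hm => hL m (hM.1.2 m hm)

theorem optA2_eq_image {L : Finset Move} (hL : ∀ m, MoveLegal Γ S m → m ∈ L) :
    optA2 Γ S = ↑((L.powerset.filter (QLegalA2 Γ S)).image (qApply Γ S)) :=
  setOf_qApply_eq_image fun _ hM m hm => hL m (hM.1.2 m hm)

end QuantumOptions

def binaryTriples : Finset (ℕ × ℕ × ℕ) := {0, 1} ×ˢ {0, 1} ×ˢ {0, 1}

def unitMoves : Finset (Fin 3 × ℕ) := Finset.univ ×ˢ {1}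

theorem mem_unitMoves_of_moveLegal {S : Finset (ℕ × ℕ × ℕ)} (hS : S ⊆ binaryTriples)
    {m : Fin 3 × ℕ} (hm : MoveLegal nim3Γ S m) : m ∈ unitMoves := by
  obtain ⟨G, hG, hsome⟩ := hm
  have hG' := hS hG
  simp only [binaryTriples, Finset.mem_product, Finset.mem_insert, Finset.mem_singleton] at hG'
  obtain ⟨h, x⟩ := m
  simp only [unitMoves, Finset.mem_product, Finset.mem_univ, Finset.mem_singleton, true_and]
  unfold nim3Γ at hsome
  split_ifs at hsome <;> simp_all <;> omega

theorem optA_nim3Γ_eq {S : Finset (ℕ × ℕ × ℕ)} (hS : S ⊆ binaryTriples) :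
    optA nim3Γ S = ↑((unitMoves.powerset.filter (QLegalA nim3Γ S)).image (qApply nim3Γ S)) :=
  optA_eq_image fun _ => mem_unitMoves_of_moveLegal hS

theorem optA2_nim3Γ_eq {S : Finset (ℕ × ℕ × ℕ)} (hS : S ⊆ binaryTriples) :
    optA2 nim3Γ S = ↑((unitMoves.powerset.filter (QLegalA2 nim3Γ S)).image (qApply nim3Γ S)) :=
  optA2_eq_image fun _ => mem_unitMoves_of_moveLegal hS

def oneToken : Finset (ℕ × ℕ × ℕ) := {(1, 0, 0), (0, 1, 0), (0, 0, 1)}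

def twoTokens : Finset (ℕ × ℕ × ℕ) := {(0, 1, 1), (1, 0, 1), (1, 1, 0)}

theorem optA_nim3Γ_zero : optA nim3Γ {(0, 0, 0)} = ∅ := by
  rw [optA_nim3Γ_eq (by decide), Finset.coe_eq_empty]
  decide

theorem optA_nim3Γ_oneToken : optA nim3Γ oneToken = {{(0, 0, 0)}} := by
  rw [optA_nim3Γ_eq (by decide), Finset.coe_eq_singleton]
  decide

theorem optA_nim3Γ_twoTokens : optA nim3Γ twoTokens = {oneToken} := by
  rw [optA_nim3Γ_eq (by decide), Finset.coe_eq_singleton]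
  decide

theorem twoTokens_mem_optA_nim3Γ : twoTokens ∈ optA nim3Γ {(1, 1, 1)} := by
  rw [optA_nim3Γ_eq (by decide), Finset.mem_coe]
  decide

theorem oneToken_mem_optA_nim3Γ {T : Finset (ℕ × ℕ × ℕ)} (hT : T ∈ optA nim3Γ {(1, 1, 1)}) :
    oneToken ∈ optA nim3Γ T := by
  have hT' : T ∈ ({{(0, 1, 1), (1, 0, 1)}, {(0, 1, 1), (1, 1, 0)}, {(1, 0, 1), (1, 1, 0)},
      twoTokens} : Finset (Finset (ℕ × ℕ × ℕ))) := by
    rw [optA_nim3Γ_eq (by decide), Finset.mem_coe] at hT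
    revert T
    decide
  simp only [Finset.mem_insert, Finset.mem_singleton] at hT'
  rcases hT' with rfl | rfl | rfl | rfl <;>
  · rw [optA_nim3Γ_eq (by decide), Finset.mem_coe]
    decide

theorem optA2_nim3Γ_singleton {G : ℕ × ℕ × ℕ} (hG : G ∈ oneToken) : optA2 nim3Γ {G} = ∅ := by
  simp only [oneToken, Finset.mem_insert, Finset.mem_singleton] at hG
  rcases hG with rfl | rfl | rfl <;>
  · rw [optA2_nim3Γ_eq (by decide), Finset.coe_eq_empty]
    decide

theorem exists_singleton_mem_optA2_nim3Γ {T : Finset (ℕ × ℕ × ℕ)}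
    (hT : T ∈ optA2 nim3Γ {(1, 1, 1)}) : ∃ G ∈ oneToken, {G} ∈ optA2 nim3Γ T := by
  have hT' : T ∈ ({{(0, 1, 1), (1, 0, 1)}, {(0, 1, 1), (1, 1, 0)}, {(1, 0, 1), (1, 1, 0)}} :
      Finset (Finset (ℕ × ℕ × ℕ))) := by
    rw [optA2_nim3Γ_eq (by decide), Finset.mem_coe] at hT
    revert T
    decide
  simp only [Finset.mem_insert, Finset.mem_singleton] at hT'
  rcases hT' with rfl | rfl | rfl
  · exact ⟨(0, 0, 1), by decide, by rw [optA2_nim3Γ_eq (by decide), Finset.mem_coe]; decide⟩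
  · exact ⟨(0, 1, 0), by decide, by rw [optA2_nim3Γ_eq (by decide), Finset.mem_coe]; decide⟩
  · exact ⟨(1, 0, 0), by decide, by rw [optA2_nim3Γ_eq (by decide), Finset.mem_coe]; decide⟩

theorem hasGrundy_optA_zero : HasGrundy (optA nim3Γ) {(0, 0, 0)} 0 := by
  simp [hasGrundy_zero_iff, optA_nim3Γ_zero]

theorem hasGrundy_optA_oneToken : HasGrundy (optA nim3Γ) oneToken 1 := by
  rw [hasGrundy_one_iff]
  refine ⟨hasGrundy_optA_zero.nPos_of_mem (by rw [optA_nim3Γ_oneToken]; rfl), ?_⟩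
  rw [optA_nim3Γ_oneToken]
  rintro _ rfl
  exact hasGrundy_optA_zero.nPos_of_lt Nat.one_pos

theorem hasGrundy_optA_twoTokens : HasGrundy (optA nim3Γ) twoTokens 0 := by
  rw [hasGrundy_zero_iff, optA_nim3Γ_twoTokens]
  rintro _ rfl
  exact (hasGrundy_one_iff.1 hasGrundy_optA_oneToken).1

theorem hasGrundy_optA2_singleton {G : ℕ × ℕ × ℕ} (hG : G ∈ oneToken) :
    HasGrundy (optA2 nim3Γ) {G} 0 := by
  simp [hasGrundy_zero_iff, optA2_nim3Γ_singleton hG]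

/-- `⟨Nim(1,1,1)⟩` has Grundy value `0` in Ruleset A|2 but
Grundy value `1` in unrestricted Ruleset A. -/
theorem rulesetA2_vs_A_three_heaps :
    HasGrundy (optA2 nim3Γ) ({((1 : ℕ), (1 : ℕ), (1 : ℕ))} : Finset (ℕ × ℕ × ℕ)) 0 ∧
    HasGrundy (optA nim3Γ) ({((1 : ℕ), (1 : ℕ), (1 : ℕ))} : Finset (ℕ × ℕ × ℕ)) 1 := by
  refine ⟨hasGrundy_zero_iff.2 fun T hT => ?_, hasGrundy_one_iff.2 ⟨?_, fun T hT => ?_⟩⟩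
  · obtain ⟨G, hG, hGT⟩ := exists_singleton_mem_optA2_nim3Γ hT
    exact (hasGrundy_optA2_singleton hG).nPos_of_mem hGT
  · exact hasGrundy_optA_twoTokens.nPos_of_mem twoTokens_mem_optA_nim3Γ
  · exact hasGrundy_optA_oneToken.nPos_of_mem (oneToken_mem_optA_nim3Γ hT)

end QGame
end

section
/- In Quantum Nim under Ruleset B, a superposition of single Nim heaps whose largest heap has size exactly 2 is a second-player win (Grundy value 0): the only legal Q-move from such a position is the superposition {remove 1, remove 2}, leading to a position of Grundy value 1. -/
namespace QGame

/-!
With largest heap `2` the legal classical moves are exactly `1` and `2`, so Ruleset B admits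
only the Q-move `{1, 2}`, which leads to `{0, 1}`. There the only legal classical move is `1`,
which Ruleset B then allows alone, leading to the terminal position `{0}`. The chain
`S → {0, 1} → {0}` of unique options gives the values `0, 1, 0` by the mex rule.
-/

open Finset

section Game

variable {α : Type*} {opt : α → Set α}

/-- The mex rule at `0`, each option's nonzero value being witnessed by a move to a
`0`-position. -/
theorem hasGrundy_zero_of_forall_exists {p : α}
    (h : ∀ q ∈ opt p, ∃ r ∈ opt q, HasGrundy opt r 0) : HasGrundy opt p 0 := by
  rintro ⟨q, k⟩ (⟨hq, rfl⟩ | ⟨-, hk⟩)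
  · obtain ⟨r, hr, hr0⟩ := h q hq
    exact NPos.mk _ (r, 0) (Or.inl ⟨hr, rfl⟩) hr0
  · exact absurd hk (Nat.not_lt_zero k)

theorem hasGrundy_one_of_forall {p q : α} (hq : q ∈ opt p)
    (h : ∀ r ∈ opt p, HasGrundy opt r 0) : HasGrundy opt p 1 := by
  rintro ⟨r, k⟩ (⟨hr, rfl⟩ | ⟨rfl, hk⟩)
  · exact NPos.mk _ (r, 0) (Or.inr ⟨rfl, Nat.zero_lt_one⟩) (h r hr)
  · obtain rfl : k = 0 := Nat.lt_one_iff.1 hk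
    exact NPos.mk _ (q, 0) (Or.inl ⟨hq, rfl⟩) (h q hq)

end Game

section RulesetB

variable {Pos Move : Type} {Γ : Pos → Move → Option Pos} {S : Finset Pos}

theorem optB_eq_empty [DecidableEq Pos] (h : ∀ m, ¬MoveLegal Γ S m) : optB Γ S = ∅ := by
  ext T
  simp only [optB, Set.mem_ofPred_eq, Set.mem_empty_iff_false, iff_false]
  rintro ⟨M, ⟨⟨⟨m, hm⟩, hlegal⟩, -⟩, -⟩
  exact h m (hlegal m hm)

theorem qLegalB_iff_eq_of_card_le_two {L : Finset Move} (hL : ∀ m, MoveLegal Γ S m ↔ m ∈ L)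
    (hne : L.Nonempty) (hcard : #L ≤ 2) (M : Finset Move) : QLegalB Γ S M ↔ M = L := by
  constructor
  · rintro ⟨⟨-, hlegal⟩, hM | hall⟩
    · exact eq_of_subset_of_card_le (fun m hm => (hL m).1 (hlegal m hm)) (hcard.trans hM)
    · exact Subset.antisymm (fun m hm => (hL m).1 (hlegal m hm))
        fun m hm => hall m ((hL m).2 hm)
  · rintro rfl
    exact ⟨⟨hne, fun m hm => (hL m).2 hm⟩, Or.inr fun m hm => (hL m).1 hm⟩

theorem optB_eq_singleton [DecidableEq Pos] {L : Finset Move}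
    (h : ∀ M, QLegalB Γ S M ↔ M = L) : optB Γ S = {qApply Γ S L} := by
  ext T
  simp only [optB, Set.mem_ofPred_eq, Set.mem_singleton_iff, h, exists_eq_left]

end RulesetB

section Nim

variable {S : Finset ℕ}

theorem isSome_nimΓ_iff {n x : ℕ} : (nimΓ n x).isSome ↔ 1 ≤ x ∧ x ≤ n := by
  unfold nimΓ
  split_ifs with h <;> simp [h]

theorem mem_toFinset_nimΓ_iff {a n x : ℕ} :
    a ∈ (nimΓ n x).toFinset ↔ 1 ≤ x ∧ x ≤ n ∧ a = n - x := by
  unfold nimΓ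
  split_ifs with h
  · simp [h]
  · simpa using fun h1 h2 _ => h ⟨h1, h2⟩

theorem moveLegal_nimΓ_iff (hS : S.Nonempty) (m : ℕ) :
    MoveLegal nimΓ S m ↔ m ∈ Icc 1 (S.max' hS) := by
  simp only [MoveLegal, isSome_nimΓ_iff, mem_Icc]
  constructor
  · rintro ⟨G, hG, h1, h2⟩
    exact ⟨h1, h2.trans (S.le_max' G hG)⟩
  · rintro ⟨h1, h2⟩
    exact ⟨_, S.max'_mem hS, h1, h2⟩

theorem qApply_nimΓ_Icc_max' (hS : S.Nonempty) :
    qApply nimΓ S (Icc 1 (S.max' hS)) = range (S.max' hS) := by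
  ext a
  simp only [qApply, mem_biUnion, mem_Icc, mem_toFinset_nimΓ_iff, mem_range]
  constructor
  · rintro ⟨G, hG, m, -, h1, h2, rfl⟩
    have := S.le_max' G hG
    omega
  · intro ha
    exact ⟨_, S.max'_mem hS, S.max' hS - a, ⟨by omega, by omega⟩, by omega, by omega, by omega⟩

theorem qLegalB_nimΓ_iff (hS : S.Nonempty) (h1 : 1 ≤ S.max' hS) (h2 : S.max' hS ≤ 2)
    (M : Finset ℕ) : QLegalB nimΓ S M ↔ M = Icc 1 (S.max' hS) :=
  qLegalB_iff_eq_of_card_le_two (moveLegal_nimΓ_iff hS) (nonempty_Icc.2 h1)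
    (by rw [Nat.card_Icc]; omega) M

theorem optB_nimΓ_eq_singleton_range (hS : S.Nonempty) (h1 : 1 ≤ S.max' hS)
    (h2 : S.max' hS ≤ 2) : optB nimΓ S = {range (S.max' hS)} := by
  rw [optB_eq_singleton (qLegalB_nimΓ_iff hS h1 h2), qApply_nimΓ_Icc_max']

theorem optB_nimΓ_eq_empty (hS : S.Nonempty) (h0 : S.max' hS = 0) : optB nimΓ S = ∅ :=
  optB_eq_empty fun m => by simp [moveLegal_nimΓ_iff hS, h0]

end Nim

/-- in Ruleset B, a superposition of single Nim heaps whose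
largest heap has size exactly `2` has Grundy value `0`; its only legal Q-move
is the superposition `{remove 1, remove 2}`, which leads to a position of
Grundy value `1`. -/
theorem rulesetB_max_two (S : Finset ℕ) (hS : S.Nonempty)
    (hmax : S.max' hS = 2) :
    HasGrundy (optB nimΓ) S 0 ∧
    (∀ M, QLegalB nimΓ S M ↔ M = ({1, 2} : Finset ℕ)) ∧
    HasGrundy (optB nimΓ) (qApply nimΓ S ({1, 2} : Finset ℕ)) 1 := by
  have hmoves : Icc 1 (S.max' hS) = {1, 2} := by rw [hmax]; rfl
  have hopt2 : optB nimΓ S = {range 2} := by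
    rw [optB_nimΓ_eq_singleton_range hS (by omega) (by omega), hmax]
  have hopt1 : optB nimΓ (range 2) = {range 1} :=
    optB_nimΓ_eq_singleton_range nonempty_range_add_one (by decide) (by decide)
  have hopt0 : optB nimΓ (range 1) = ∅ := optB_nimΓ_eq_empty nonempty_range_add_one (by decide)
  have hval0 : HasGrundy (optB nimΓ) (range 1) 0 :=
    hasGrundy_zero_of_forall_exists fun q hq => by simp only [hopt0] at hq; exact hq.elim
  have hval1 : HasGrundy (optB nimΓ) (range 2) 1 := by
    refine hasGrundy_one_of_forall (hopt1 ▸ Set.mem_singleton _) fun r hr => ?_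
    rw [hopt1, Set.mem_singleton_iff] at hr
    rwa [hr]
  refine ⟨hasGrundy_zero_of_forall_exists fun q hq => ⟨range 1, ?_, hval0⟩, ?_, ?_⟩
  · rw [hopt2, Set.mem_singleton_iff] at hq
    exact hq ▸ hopt1 ▸ Set.mem_singleton _
  · rw [← hmoves]
    exact qLegalB_nimΓ_iff hS (by omega) (by omega)
  · rw [← hmoves, qApply_nimΓ_Icc_max', hmax]
    exact hval1

end QGame
end

section
/- In any of the quantum Rulesets A, B, C, C', D, the set of legal Q-moves from a quantum position, and the resulting positions, depend only on the set of realisations (the set of classical positions in the superposition), not on the history of moves or on multiplicities of realisations. -/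
namespace QGame

/-- `Reach Γ G hist G'` : `G'` is a realisation of the history `hist` of
Q-moves played from `G` — it is obtained by choosing one classical move in
each Q-move of `hist`, forming a legal classical play. -/
def Reach {Pos Move : Type} (Γ : Pos → Move → Option Pos) :
    Pos → List (Finset Move) → Pos → Prop
  | G, [], G' => G' = G
  | G, M :: rest, G' => ∃ m ∈ M, ∃ H, Γ G m = some H ∧ Reach Γ H rest G'

section SetVersions

variable {Pos Move : Type} (Γ : Pos → Move → Option Pos)

/-- `m` is legal in at least one realisation of the set `R`. -/
def MoveLegalS (R : Set Pos) (m : Move) : Prop := ∃ G ∈ R, (Γ G m).isSome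

def QBaseS (R : Set Pos) (M : Finset Move) : Prop :=
  M.Nonempty ∧ ∀ m ∈ M, MoveLegalS Γ R m

def QLegalAS (R : Set Pos) (M : Finset Move) : Prop := QBaseS Γ R M ∧ 2 ≤ M.card
def QLegalBS (R : Set Pos) (M : Finset Move) : Prop :=
  QBaseS Γ R M ∧ (2 ≤ M.card ∨ ∀ m, MoveLegalS Γ R m → m ∈ M)
def QLegalCS (R : Set Pos) (M : Finset Move) : Prop :=
  QBaseS Γ R M ∧ (2 ≤ M.card ∨ ∀ G ∈ R, ∀ m ∈ M, (Γ G m).isSome)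
def QLegalC'S (R : Set Pos) (M : Finset Move) : Prop :=
  QBaseS Γ R M ∧
    (2 ≤ M.card ∨ ∀ m ∈ M, ∀ G ∈ R, (∃ m', (Γ G m').isSome) → (Γ G m).isSome)
def QLegalDS (R : Set Pos) (M : Finset Move) : Prop := QBaseS Γ R M

end SetVersions

theorem reach_append {Pos Move : Type} (Γ : Pos → Move → Option Pos)
    (h h' : List (Finset Move)) (G₀ G' : Pos) :
    Reach Γ G₀ (h ++ h') G' ↔ ∃ H, Reach Γ G₀ h H ∧ Reach Γ H h' G' := by
  induction h generalizing G₀ with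
  | nil => simp [Reach]
  | cons M rest ih =>
    simp only [List.cons_append, Reach, ih]
    constructor
    · rintro ⟨m, hm, H, hΓ, K, hK, hK'⟩
      exact ⟨K, ⟨m, hm, H, hΓ, hK⟩, hK'⟩
    · rintro ⟨K, ⟨m, hm, H, hΓ, hK⟩, hK'⟩
      exact ⟨m, hm, H, hΓ, K, hK, hK'⟩

theorem setOf_reach_append {Pos Move : Type} (Γ : Pos → Move → Option Pos)
    (G₀ : Pos) (h h' : List (Finset Move)) :
    {G | Reach Γ G₀ (h ++ h') G} = ⋃ H ∈ {G | Reach Γ G₀ h G}, {G | Reach Γ H h' G} := by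
  ext G
  simp [reach_append]

/-- in each of the Rulesets A, B, C, C' and D, the legal
Q-moves from a quantum position and the resulting realisation-sets depend
only on the set of realisations, not on the history producing it. -/
theorem history_independence {Pos Move : Type}
    (Γ : Pos → Move → Option Pos) (G₀ G₀' : Pos)
    (h1 h2 : List (Finset Move))
    (heq : {G | Reach Γ G₀ h1 G} = {G | Reach Γ G₀' h2 G}) :
    (∀ M : Finset Move,
      (QLegalAS Γ {G | Reach Γ G₀ h1 G} M ↔ QLegalAS Γ {G | Reach Γ G₀' h2 G} M) ∧
      (QLegalBS Γ {G | Reach Γ G₀ h1 G} M ↔ QLegalBS Γ {G | Reach Γ G₀' h2 G} M) ∧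
      (QLegalCS Γ {G | Reach Γ G₀ h1 G} M ↔ QLegalCS Γ {G | Reach Γ G₀' h2 G} M) ∧
      (QLegalC'S Γ {G | Reach Γ G₀ h1 G} M ↔ QLegalC'S Γ {G | Reach Γ G₀' h2 G} M) ∧
      (QLegalDS Γ {G | Reach Γ G₀ h1 G} M ↔ QLegalDS Γ {G | Reach Γ G₀' h2 G} M)) ∧
    (∀ M : Finset Move,
      {G | Reach Γ G₀ (h1 ++ [M]) G} = {G | Reach Γ G₀' (h2 ++ [M]) G}) := by
  refine ⟨fun M => ?_, fun M => ?_⟩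
  · rw [heq]
    exact ⟨Iff.rfl, Iff.rfl, Iff.rfl, Iff.rfl, Iff.rfl⟩
  · rw [setOf_reach_append, setOf_reach_append, heq]

end QGame
end
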